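/- arXiv:2604.21680 — 3 statements merged into one kernel-verified Lean document; each statement's English description precedes it below -/
import Mathlib

section
/- Let 0 < a < b < 1. Let 𝒩 be a set of Bernoulli distributions on {0,1} all of whose success probabilities are ≤ a, with Bernoulli(a) ∈ 𝒩, and let 𝒜 be a set of Bernoulli distributions all of whose success probabilities are ≥ b, with Bernoulli(b) ∈ 𝒜. Define E* : {0,1} → (0,∞) by E*(1) = b/a and E*(0) = (1−b)/(1−a) (the likelihood ratio of Bernoulli(b) to Bernoulli(a)). Then E* is an e-variable for 𝒩, and it is growth-rate optimal in the worst case: sup over e-variables E for 𝒩 of inf over M ∈ 𝒜 of E_M[log E] = inf over M ∈ 𝒜 of E_M[log E*] = d(b,a), with expectations in the extended reals. -/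
open MeasureTheory Real Set
open scoped ENNReal

noncomputable section

attribute [local instance] Classical.propDecidable

/-- Bernoulli measure on `Bool` with success probability `p`. -/
def bern (p : ℝ) : Measure Bool :=
  (ENNReal.ofReal (1 - p)) • Measure.dirac false + (ENNReal.ofReal p) • Measure.dirac true

/-- Nonnegative part of an extended real, as an extended nonnegative real. -/
def eToENN (x : EReal) : ℝ≥0∞ := if x = ⊤ then ⊤ else ENNReal.ofReal x.toReal

/-- Integral of an extended-real-valued function, with values in the extended reals. -/
def eintE {Y : Type*} [MeasurableSpace Y] (μ : Measure Y) (f : Y → EReal) : EReal :=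
  ((∫⁻ y, eToENN (f y) ∂μ : ℝ≥0∞) : EReal) - ((∫⁻ y, eToENN (-(f y)) ∂μ : ℝ≥0∞) : EReal)

/-- Extended-real logarithm, with `log x = -∞` for `x ≤ 0`. -/
def elog (x : ℝ) : EReal := if x ≤ 0 then ⊥ else ((Real.log x : ℝ) : EReal)


/-!
`E*` is the likelihood ratio of `Bernoulli(b)` to `Bernoulli(a)`. Every e-variable `E` for the
null class satisfies `E_{Bernoulli(a)}[E] ≤ 1`, and Gibbs' inequality then bounds
`E_{Bernoulli(b)}[log E]` by `d(b,a)`, with equality for `E*`. Among the alternatives,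
`Bernoulli(b)` is the worst case for `E*` because `log E*(1) > 0 > log E*(0)`, and `E*` is an
e-variable because its mean under `Bernoulli(p)` is affine and increasing in `p`
and equals `1` at `p = a`.
-/

def bernKL (b a : ℝ) : ℝ := b * log (b / a) + (1 - b) * log ((1 - b) / (1 - a))

def bernLR (a b : ℝ) (y : Bool) : ℝ := if y then b / a else (1 - b) / (1 - a)

section Bernoulli

variable {q : ℝ}

lemma lintegral_bern (g : Bool → ℝ≥0∞) :
    ∫⁻ y, g y ∂(bern q) = ENNReal.ofReal (1 - q) * g false + ENNReal.ofReal q * g true := by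
  simp [bern, lintegral_add_measure, lintegral_smul_measure, lintegral_dirac]

lemma lintegral_bern_ofReal (hq0 : 0 ≤ q) (hq1 : q ≤ 1) {g : Bool → ℝ} (hg : ∀ y, 0 ≤ g y) :
    ∫⁻ y, ENNReal.ofReal (g y) ∂(bern q) = ENNReal.ofReal ((1 - q) * g false + q * g true) := by
  rw [lintegral_bern, ← ENNReal.ofReal_mul (by linarith), ← ENNReal.ofReal_mul hq0,
    ← ENNReal.ofReal_add (mul_nonneg (by linarith) (hg false)) (mul_nonneg hq0 (hg true))]

lemma lintegral_bern_ofReal_le_one_iff (hq0 : 0 ≤ q) (hq1 : q ≤ 1) {g : Bool → ℝ}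
    (hg : ∀ y, 0 ≤ g y) :
    ∫⁻ y, ENNReal.ofReal (g y) ∂(bern q) ≤ 1 ↔ (1 - q) * g false + q * g true ≤ 1 := by
  rw [lintegral_bern_ofReal hq0 hq1 hg, ENNReal.ofReal_le_one]

lemma eToENN_coe (c : ℝ) : eToENN (c : EReal) = ENNReal.ofReal c := by
  simp [eToENN]

lemma eintE_bern_coe (hq0 : 0 ≤ q) (hq1 : q ≤ 1) (g : Bool → ℝ) :
    eintE (bern q) (fun y => (g y : EReal)) = (((1 - q) * g false + q * g true : ℝ) : EReal) := by
  simp only [eintE, lintegral_bern, ← EReal.coe_neg, eToENN_coe, EReal.coe_ennreal_add,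
    EReal.coe_ennreal_mul, EReal.coe_ennreal_ofReal, max_eq_left hq0,
    max_eq_left (sub_nonneg.2 hq1)]
  norm_cast
  linear_combination (1 - q) * max_zero_sub_max_neg_zero_eq_self (g false) +
    q * max_zero_sub_max_neg_zero_eq_self (g true)

lemma eintE_bern_of_eq_bot (hq0 : 0 < q) (hq1 : q < 1) {f : Bool → EReal} {y : Bool}
    (hy : f y = ⊥) : eintE (bern q) f = ⊥ := by
  have hneg : eToENN (-f y) = ⊤ := by simp [hy, eToENN]
  have hinf : ∫⁻ y, eToENN (-f y) ∂(bern q) = ⊤ := by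
    rw [lintegral_bern]
    cases y
    · simp [hneg, ENNReal.mul_top, hq1]
    · simp [hneg, ENNReal.mul_top, hq0]
  rw [eintE, hinf, EReal.coe_ennreal_top, EReal.sub_top]

lemma elog_of_pos {x : ℝ} (hx : 0 < x) : elog x = (log x : EReal) := by
  simp [elog, not_le.2 hx]

lemma eintE_bern_elog (hq0 : 0 ≤ q) (hq1 : q ≤ 1) {g : Bool → ℝ} (hg : ∀ y, 0 < g y) :
    eintE (bern q) (fun y => elog (g y)) =
      (((1 - q) * log (g false) + q * log (g true) : ℝ) : EReal) := by
  simp only [elog_of_pos (hg _)]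
  exact eintE_bern_coe hq0 hq1 (fun y => log (g y))

end Bernoulli

section LikelihoodRatio

variable {a b : ℝ}

lemma bernLR_pos (ha : 0 < a) (ha1 : a < 1) (hb : 0 < b) (hb1 : b < 1) (y : Bool) :
    0 < bernLR a b y := by
  cases y
  · exact div_pos (by linarith) (by linarith)
  · exact div_pos hb ha

lemma bernLR_mean_le_one (ha : 0 < a) (ha1 : a < 1) (hab : a ≤ b) {p : ℝ} (hpa : p ≤ a) :
    (1 - p) * bernLR a b false + p * bernLR a b true ≤ 1 := by
  have ha1 : 0 < 1 - a := sub_pos.2 ha1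
  simp only [bernLR, Bool.false_eq_true, if_false, if_true]
  rw [← mul_div_assoc, ← mul_div_assoc, div_add_div _ _ ha1.ne' ha.ne',
    div_le_one (mul_pos ha1 ha)]
  nlinarith [mul_nonneg (sub_nonneg.2 hpa) (sub_nonneg.2 hab)]

/-- Under an alternative `q ≥ b` the outcome `true`, whose log-likelihood ratio is the larger
one, only becomes more likely. -/
lemma bernKL_le_mean_log_bernLR (ha : 0 < a) (hab : a ≤ b) (hb1 : b < 1) {q : ℝ} (hbq : b ≤ q) :
    bernKL b a ≤ (1 - q) * log (bernLR a b false) + q * log (bernLR a b true) := by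
  have hlog0 : log ((1 - b) / (1 - a)) ≤ 0 :=
    log_nonpos (div_nonneg (by linarith) (by linarith)) ((div_le_one (by linarith)).2 (by linarith))
  have hlog1 : 0 ≤ log (b / a) := log_nonneg ((one_le_div ha).2 hab)
  simp only [bernKL, bernLR, Bool.false_eq_true, if_false, if_true]
  nlinarith [mul_nonneg (sub_nonneg.2 hbq) (sub_nonneg.2 (hlog0.trans hlog1))]

/-- Gibbs' inequality for two-point distributions: `log t ≤ t - 1` applied to `x / E*(0)` and
`y / E*(1)`. -/
lemma mean_log_le_bernKL (ha : 0 < a) (ha1 : a < 1) (hb : 0 < b) (hb1 : b < 1) {x y : ℝ}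
    (hx : 0 < x) (hy : 0 < y) (h : (1 - a) * x + a * y ≤ 1) :
    (1 - b) * log x + b * log y ≤ bernKL b a := by
  have hb1' : 0 < 1 - b := by linarith
  have ha1' : 0 < 1 - a := by linarith
  have h0 : log x - log ((1 - b) / (1 - a)) ≤ (1 - a) * x / (1 - b) - 1 := by
    rw [← log_div hx.ne' (by positivity)]
    convert log_le_sub_one_of_pos (div_pos hx (div_pos hb1' ha1')) using 2
    field_simp
  have h1 : log y - log (b / a) ≤ a * y / b - 1 := by
    rw [← log_div hy.ne' (by positivity)]
    convert log_le_sub_one_of_pos (div_pos hy (div_pos hb ha)) using 2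
    field_simp
  have hsum : (1 - b) * ((1 - a) * x / (1 - b) - 1) + b * (a * y / b - 1) ≤ 0 := by
    field_simp
    linarith
  unfold bernKL
  nlinarith [mul_le_mul_of_nonneg_left h0 hb1'.le, mul_le_mul_of_nonneg_left h1 hb.le]

lemma eintE_bern_elog_le_bernKL (ha : 0 < a) (ha1 : a < 1) (hb : 0 < b) (hb1 : b < 1)
    {E : Bool → ℝ} (hE0 : ∀ y, 0 ≤ E y) (hE : ∫⁻ y, ENNReal.ofReal (E y) ∂(bern a) ≤ 1) :
    eintE (bern b) (fun y => elog (E y)) ≤ bernKL b a := by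
  by_cases hpos : ∀ y, 0 < E y
  · rw [eintE_bern_elog hb.le hb1.le hpos, EReal.coe_le_coe_iff]
    refine mean_log_le_bernKL ha ha1 hb hb1 (hpos false) (hpos true) ?_
    exact (lintegral_bern_ofReal_le_one_iff ha.le ha1.le hE0).1 hE
  · obtain ⟨y, hy⟩ := not_forall.1 hpos
    have hbot : elog (E y) = ⊥ := if_pos (not_lt.1 hy)
    rw [eintE_bern_of_eq_bot hb hb1 (f := fun y => elog (E y)) hbot]
    exact bot_le

end LikelihoodRatio

/-- For Bernoulli classes separated by `a < b`, the likelihood ratio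
`E*` of `Bernoulli(b)` to `Bernoulli(a)` is an e-variable for the null class and is
growth-rate optimal in the worst case, with optimal value `d(b,a)`. -/
theorem grow_bernoulli_classes (a b : ℝ) (ha : 0 < a) (hab : a < b) (hb : b < 1)
    (𝒩 𝒜 : Set (Measure Bool))
    (h𝒩 : ∀ μ ∈ 𝒩, ∃ p : ℝ, 0 ≤ p ∧ p ≤ a ∧ μ = bern p) (ha𝒩 : bern a ∈ 𝒩)
    (h𝒜 : ∀ μ ∈ 𝒜, ∃ p : ℝ, b ≤ p ∧ p ≤ 1 ∧ μ = bern p) (hb𝒜 : bern b ∈ 𝒜)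
    (Estar : Bool → ℝ) (hE : Estar = fun y => if y then b / a else (1 - b) / (1 - a)) :
    (∀ μ ∈ 𝒩, (∫⁻ y, ENNReal.ofReal (Estar y) ∂μ) ≤ 1) ∧
      (⨆ E ∈ {E : Bool → ℝ | (∀ y, 0 ≤ E y) ∧
          ∀ μ ∈ 𝒩, (∫⁻ y, ENNReal.ofReal (E y) ∂μ) ≤ 1},
        ⨅ M ∈ 𝒜, eintE M (fun y => elog (E y))) =
        (⨅ M ∈ 𝒜, eintE M (fun y => elog (Estar y))) ∧
      (⨅ M ∈ 𝒜, eintE M (fun y => elog (Estar y))) =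
        ((b * Real.log (b / a) + (1 - b) * Real.log ((1 - b) / (1 - a)) : ℝ) : EReal) := by
  obtain rfl : Estar = bernLR a b := hE
  have hb0 : 0 < b := ha.trans hab
  have ha1 : a < 1 := hab.trans hb
  have hpos := bernLR_pos ha ha1 hb0 hb
  have hnull : ∀ μ ∈ 𝒩, ∫⁻ y, ENNReal.ofReal (bernLR a b y) ∂μ ≤ 1 := by
    intro μ hμ
    obtain ⟨p, hp0, hpa, rfl⟩ := h𝒩 μ hμ
    rw [lintegral_bern_ofReal_le_one_iff hp0 (hpa.trans ha1.le) fun y => (hpos y).le]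
    exact bernLR_mean_le_one ha ha1 hab.le hpa
  have hvalue : ⨅ M ∈ 𝒜, eintE M (fun y => elog (bernLR a b y)) = bernKL b a := by
    refine le_antisymm ((iInf₂_le _ hb𝒜).trans_eq ?_) (le_iInf₂ fun M hM => ?_)
    · rw [eintE_bern_elog hb0.le hb.le hpos, EReal.coe_eq_coe_iff]
      simp only [bernKL, bernLR, Bool.false_eq_true, if_false, if_true]
      ring
    · obtain ⟨q, hbq, hq1, rfl⟩ := h𝒜 M hM
      rw [eintE_bern_elog (hb0.le.trans hbq) hq1 hpos, EReal.coe_le_coe_iff]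
      exact bernKL_le_mean_log_bernLR ha hab.le hb hbq
  refine ⟨hnull, le_antisymm ?_ (le_iSup₂_of_le _ ⟨fun y => (hpos y).le, hnull⟩ le_rfl), hvalue⟩
  rw [hvalue]
  exact iSup₂_le fun E ⟨hE0, hEnull⟩ => (iInf₂_le _ hb𝒜).trans
    (eintE_bern_elog_le_bernKL ha ha1 hb0 hb hE0 (hEnull _ ha𝒩))
end
end

section
/- Let U : (0,∞) → ℝ be concave and strictly increasing (extended to [0,∞] monotonically, with values in the extended reals). Let 𝒫₀ and 𝒫₁ be classes of probability measures on a measurable space X, let (P₀*, P₁*) ∈ 𝒫₀ × 𝒫₁ satisfy the stochastic-dominance property, and let 𝒞 be an arbitrary set of measurable functions X → [0,∞); for a set H of probability measures define ℰ′(H) = { E ∈ 𝒞 : ∫ E dP ≤ 1 for all P ∈ H }. Suppose E* ∈ ℰ′({P₀*}) maximizes E ↦ E_{P₁*}[U(E)] over ℰ′({P₀*}) and that E* = ψ(L*) for some nondecreasing measurable ψ : [0,∞) → [0,∞). Then E* ∈ ℰ′(𝒫₀), and sup over E ∈ ℰ′(𝒫₀) of inf over P₁ ∈ 𝒫₁ of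 E_{P₁}[U(E)] equals inf over P₁ ∈ 𝒫₁ of E_{P₁}[U(E*)], which equals E_{P₁*}[U(E*)] (expectations in the extended reals). -/
open MeasureTheory Real Set
open scoped ENNReal

noncomputable section

attribute [local instance] Classical.propDecidable

/-!
The optimizer `E* = ψ(L*)` is a nondecreasing function of the likelihood ratio, so the
stochastic-dominance property of the pair `(P₀*, P₁*)` applies to `E*` itself and to `U(E*)`:
every `P₀ ∈ 𝒫₀` gives `E*` at most the mean it has under `P₀*`, hence `E*` is valid for the
composite null, and `P₁*` minimizes the expected utility of `E*` over `𝒫₁`. Together with the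
optimality of `E*` against `P₁*` this makes `(E*, P₁*)` a saddle point of the max–min problem.
-/

theorem eToENN_coe_ennreal (a : ℝ≥0∞) : eToENN a = a := by
  by_cases ha : a = ⊤
  · simp [eToENN, ha]
  · simp [eToENN, ha, EReal.toReal_coe_ennreal]

theorem eToENN_neg_coe_ennreal (a : ℝ≥0∞) : eToENN (-(a : EReal)) = 0 := by
  have hne : -(a : EReal) ≠ ⊤ := by
    simpa only [Ne, EReal.neg_eq_top_iff] using EReal.coe_ennreal_ne_bot a
  simp [eToENN, hne]

theorem eintE_coe_ennreal {Y : Type*} [MeasurableSpace Y] (μ : Measure Y) (f : Y → ℝ≥0∞) :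
    eintE μ (fun y => (f y : EReal)) = ∫⁻ y, f y ∂μ := by
  simp only [eintE, eToENN_coe_ennreal, eToENN_neg_coe_ennreal, lintegral_zero,
    EReal.coe_ennreal_zero, sub_zero]

theorem lintegral_ofReal_comp_le_of_dominance {X : Type*} [MeasurableSpace X]
    {P Q : Measure X} {L : X → ℝ}
    (hdom : ∀ f : ℝ → EReal, Measurable f → MonotoneOn f (Ici 0) →
      eintE P (fun x => f (L x)) ≤ eintE Q (fun x => f (L x)))
    {φ : ℝ → ℝ} (hφmono : MonotoneOn φ (Ici 0)) (hφmeas : Measurable φ) :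
    ∫⁻ x, ENNReal.ofReal (φ (L x)) ∂P ≤ ∫⁻ x, ENNReal.ofReal (φ (L x)) ∂Q := by
  have hmono : MonotoneOn (fun y => (ENNReal.ofReal (φ y) : EReal)) (Ici 0) :=
    fun a ha b hb hab => EReal.coe_ennreal_le_coe_ennreal_iff.mpr
      (ENNReal.ofReal_le_ofReal (hφmono ha hb hab))
  have h := hdom (fun y => (ENNReal.ofReal (φ y) : EReal))
    (measurable_coe_ennreal_ereal.comp (ENNReal.measurable_ofReal.comp hφmeas)) hmono
  rwa [eintE_coe_ennreal, eintE_coe_ennreal, EReal.coe_ennreal_le_coe_ennreal_iff] at h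

theorem biSup_biInf_eq_of_isSaddle {α ι κ : Type*} [CompleteLattice α] {S : Set ι} {T : Set κ}
    {V : ι → κ → α} {i₀ : ι} {k₀ : κ} (hi₀ : i₀ ∈ S) (hk₀ : k₀ ∈ T)
    (hmax : ∀ i ∈ S, V i k₀ ≤ V i₀ k₀) (hmin : ∀ k ∈ T, V i₀ k₀ ≤ V i₀ k) :
    (⨆ i ∈ S, ⨅ k ∈ T, V i k) = ⨅ k ∈ T, V i₀ k ∧ (⨅ k ∈ T, V i₀ k) = V i₀ k₀ := by
  have hinf : (⨅ k ∈ T, V i₀ k) = V i₀ k₀ := le_antisymm (iInf₂_le k₀ hk₀) (le_iInf₂ hmin)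
  refine ⟨le_antisymm (iSup₂_le fun i hi => ?_) (le_iSup₂_of_le i₀ hi₀ le_rfl), hinf⟩
  calc (⨅ k ∈ T, V i k) ≤ V i k₀ := iInf₂_le k₀ hk₀
    _ ≤ V i₀ k₀ := hmax i hi
    _ = ⨅ k ∈ T, V i₀ k := hinf.symm

theorem composite_lifting_general_utility_general
    {X : Type*} [MeasurableSpace X]
    (𝒫₀ 𝒫₁ : Set (Measure X))
    (Pstar₀ Pstar₁ : Measure X) (hmem₀ : Pstar₀ ∈ 𝒫₀) (hmem₁ : Pstar₁ ∈ 𝒫₁)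
    (Lstar : X → ℝ)
    -- stochastic-dominance property of the LFD pair
    (hSD₀ : ∀ f : ℝ → EReal, Measurable f → MonotoneOn f (Set.Ici 0) →
      ∀ P₀ ∈ 𝒫₀, eintE P₀ (fun x => f (Lstar x)) ≤ eintE Pstar₀ (fun x => f (Lstar x)))
    (hSD₁ : ∀ f : ℝ → EReal, Measurable f → MonotoneOn f (Set.Ici 0) →
      ∀ P₁ ∈ 𝒫₁, eintE Pstar₁ (fun x => f (Lstar x)) ≤ eintE P₁ (fun x => f (Lstar x)))
    -- the utility and its monotone extension to `[0,∞]`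
    (Ue : ℝ → EReal)
    (hUemono : MonotoneOn Ue (Set.Ici 0)) (hUemeas : Measurable Ue)
    -- the structural constraint class
    (𝒞 : Set (X → ℝ))
    -- the simple-vs-simple optimizer and its monotone representation
    (Estar : X → ℝ) (hE𝒞 : Estar ∈ 𝒞)
    (hEvalid : (∫⁻ x, ENNReal.ofReal (Estar x) ∂Pstar₀) ≤ 1)
    (hEopt : ∀ E ∈ 𝒞, (∫⁻ x, ENNReal.ofReal (E x) ∂Pstar₀) ≤ 1 →
      eintE Pstar₁ (fun x => Ue (E x)) ≤ eintE Pstar₁ (fun x => Ue (Estar x)))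
    (ψ : ℝ → ℝ) (hψmono : MonotoneOn ψ (Set.Ici 0)) (hψmeas : Measurable ψ)
    (hψnonneg : ∀ y : ℝ, 0 ≤ y → 0 ≤ ψ y)
    (hrep : ∀ x, Estar x = ψ (Lstar x)) :
    (∀ P₀ ∈ 𝒫₀, (∫⁻ x, ENNReal.ofReal (Estar x) ∂P₀) ≤ 1) ∧
      (⨆ E ∈ {E : X → ℝ | E ∈ 𝒞 ∧ ∀ P₀ ∈ 𝒫₀, (∫⁻ x, ENNReal.ofReal (E x) ∂P₀) ≤ 1},
          ⨅ P₁ ∈ 𝒫₁, eintE P₁ (fun x => Ue (E x))) =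
        (⨅ P₁ ∈ 𝒫₁, eintE P₁ (fun x => Ue (Estar x))) ∧
      (⨅ P₁ ∈ 𝒫₁, eintE P₁ (fun x => Ue (Estar x))) =
        eintE Pstar₁ (fun x => Ue (Estar x)) := by
  obtain rfl : Estar = fun x => ψ (Lstar x) := funext hrep
  have hvalid : ∀ P₀ ∈ 𝒫₀, ∫⁻ x, ENNReal.ofReal (ψ (Lstar x)) ∂P₀ ≤ 1 := fun P₀ hP₀ =>
    (lintegral_ofReal_comp_le_of_dominance (fun f hf hfm => hSD₀ f hf hfm P₀ hP₀)
      hψmono hψmeas).trans hEvalid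
  have hUψmono : MonotoneOn (fun y => Ue (ψ y)) (Ici 0) :=
    hUemono.comp hψmono fun _ hy => hψnonneg _ hy
  exact ⟨hvalid, biSup_biInf_eq_of_isSaddle ⟨hE𝒞, hvalid⟩ hmem₁
    (fun E hE => hEopt E hE.1 (hE.2 _ hmem₀))
    (hSD₁ (fun y => Ue (ψ y)) (hUemeas.comp hψmeas) hUψmono)⟩

/-- Composite lifting of constrained optimal e-variables for a general
concave strictly increasing utility `U` (extended monotonically to `[0,∞]` as `Ue`): if the
simple-vs-simple optimizer `E*` for the LFD pair is a nondecreasing transform of the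
likelihood ratio, it is valid for the composite null and achieves the max–min utility. -/
theorem composite_lifting_general_utility
    {X : Type*} [MeasurableSpace X]
    (𝒫₀ 𝒫₁ : Set (Measure X))
    (h𝒫₀ : ∀ P ∈ 𝒫₀, IsProbabilityMeasure P) (h𝒫₁ : ∀ P ∈ 𝒫₁, IsProbabilityMeasure P)
    (Pstar₀ Pstar₁ : Measure X) (hmem₀ : Pstar₀ ∈ 𝒫₀) (hmem₁ : Pstar₁ ∈ 𝒫₁)
    [IsProbabilityMeasure Pstar₀] [IsProbabilityMeasure Pstar₁]
    (hac : Pstar₁ ≪ Pstar₀)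
    (Lstar : X → ℝ) (hL : Lstar = fun x => (Pstar₁.rnDeriv Pstar₀ x).toReal)
    -- stochastic-dominance property of the LFD pair
    (hSD₀ : ∀ f : ℝ → EReal, Measurable f → MonotoneOn f (Set.Ici 0) →
      ∀ P₀ ∈ 𝒫₀, eintE P₀ (fun x => f (Lstar x)) ≤ eintE Pstar₀ (fun x => f (Lstar x)))
    (hSD₁ : ∀ f : ℝ → EReal, Measurable f → MonotoneOn f (Set.Ici 0) →
      ∀ P₁ ∈ 𝒫₁, eintE Pstar₁ (fun x => f (Lstar x)) ≤ eintE P₁ (fun x => f (Lstar x)))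
    -- the utility and its monotone extension to `[0,∞]`
    (U : ℝ → ℝ) (hUconc : ConcaveOn ℝ (Set.Ioi 0) U) (hUmono : StrictMonoOn U (Set.Ioi 0))
    (Ue : ℝ → EReal) (hUe : ∀ x : ℝ, 0 < x → Ue x = ((U x : ℝ) : EReal))
    (hUemono : MonotoneOn Ue (Set.Ici 0)) (hUemeas : Measurable Ue)
    -- the structural constraint class
    (𝒞 : Set (X → ℝ)) (h𝒞 : ∀ E ∈ 𝒞, Measurable E ∧ ∀ x, 0 ≤ E x)
    -- the simple-vs-simple optimizer and its monotone representation
    (Estar : X → ℝ) (hE𝒞 : Estar ∈ 𝒞)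
    (hEvalid : (∫⁻ x, ENNReal.ofReal (Estar x) ∂Pstar₀) ≤ 1)
    (hEopt : ∀ E ∈ 𝒞, (∫⁻ x, ENNReal.ofReal (E x) ∂Pstar₀) ≤ 1 →
      eintE Pstar₁ (fun x => Ue (E x)) ≤ eintE Pstar₁ (fun x => Ue (Estar x)))
    (ψ : ℝ → ℝ) (hψmono : MonotoneOn ψ (Set.Ici 0)) (hψmeas : Measurable ψ)
    (hψnonneg : ∀ y : ℝ, 0 ≤ y → 0 ≤ ψ y)
    (hrep : ∀ x, Estar x = ψ (Lstar x)) :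
    (∀ P₀ ∈ 𝒫₀, (∫⁻ x, ENNReal.ofReal (Estar x) ∂P₀) ≤ 1) ∧
      (⨆ E ∈ {E : X → ℝ | E ∈ 𝒞 ∧ ∀ P₀ ∈ 𝒫₀, (∫⁻ x, ENNReal.ofReal (E x) ∂P₀) ≤ 1},
          ⨅ P₁ ∈ 𝒫₁, eintE P₁ (fun x => Ue (E x))) =
        (⨅ P₁ ∈ 𝒫₁, eintE P₁ (fun x => Ue (Estar x))) ∧
      (⨅ P₁ ∈ 𝒫₁, eintE P₁ (fun x => Ue (Estar x))) =
        eintE Pstar₁ (fun x => Ue (Estar x)) :=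
  composite_lifting_general_utility_general 𝒫₀ 𝒫₁ Pstar₀ Pstar₁ hmem₀ hmem₁ Lstar hSD₀ hSD₁ Ue
    hUemono hUemeas 𝒞 Estar hE𝒞 hEvalid hEopt ψ hψmono hψmeas hψnonneg hrep
end
end

section
/- Let Q be the uniform distribution on [0,1], let μ ∈ (0, 1/2), and let λ* ∈ (0, 1/μ) satisfy the first-order condition ∫₀¹ (z − μ)/(1 + λ*(z − μ)) dz = 0 (so λ* is the unconstrained log-optimal betting coefficient, i.e., λ* maximizes λ ↦ ∫₀¹ log(1 + λ(z − μ)) dz over λ ≥ 0). Let c > 1 satisfy μ + (c−1)/λ* < 1, and define E*(z) = min(c, 1 + λ*(z − μ)). Let J_con(λ) = ∫₀¹ log(min(c, 1 + λ(z − μ))) dz for λ ≥ 0, and suppose λ_new ≥ 0 maximizes J_con; define E′(z) = min(c, 1 + λ_new(z − μ)). Then ∫₀¹ log E′(z) dz > ∫₀¹ log E*(z) dz; that is, the truncation of the unconstrained optimal bet is strictly suboptimal among c-bounded e-variables of the form min(c, 1 + λ(z − μ)) for the alternative Q. -/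
open MeasureTheory Real Set
open scoped ENNReal

noncomputable section

attribute [local instance] Classical.propDecidable

section Aux

lemma eintE_congr_ae {Y : Type*} [MeasurableSpace Y] {μ : Measure Y} {f g : Y → EReal}
    (h : f =ᵐ[μ] g) : eintE μ f = eintE μ g := by
  unfold eintE
  have h1 : (fun y => eToENN (f y)) =ᵐ[μ] fun y => eToENN (g y) :=
    h.mono fun y hy => by simp only []; rw [hy]
  have h2 : (fun y => eToENN (-(f y))) =ᵐ[μ] fun y => eToENN (-(g y)) :=
    h.mono fun y hy => by simp only []; rw [hy]
  rw [lintegral_congr_ae h1, lintegral_congr_ae h2]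

lemma eintE_coe_eq_integral {Y : Type*} [MeasurableSpace Y] (μ : Measure Y) (f : Y → ℝ)
    (hf : Integrable f μ) :
    eintE μ (fun y => ((f y : ℝ) : EReal)) = ((∫ y, f y ∂μ : ℝ) : EReal) := by
  have h1 : ∀ y, eToENN ((f y : ℝ) : EReal) = ENNReal.ofReal (f y) := by
    intro y; simp [eToENN]
  have h2 : ∀ y, eToENN (-((f y : ℝ) : EReal)) = ENNReal.ofReal (-(f y)) := by
    intro y
    rw [← EReal.coe_neg]
    simp [eToENN]
  have hA : (∫⁻ y, ENNReal.ofReal (f y) ∂μ) ≠ ⊤ :=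
    ((MeasureTheory.lintegral_ofReal_le_lintegral_enorm f).trans_lt hf.2).ne
  have hB : (∫⁻ y, ENNReal.ofReal (-(f y)) ∂μ) ≠ ⊤ :=
    ((MeasureTheory.lintegral_ofReal_le_lintegral_enorm (fun y => -(f y))).trans_lt
      hf.neg.2).ne
  have key := MeasureTheory.integral_eq_lintegral_pos_part_sub_lintegral_neg_part hf
  unfold eintE
  simp only [h1, h2]
  rw [key]
  rw [EReal.coe_sub]
  congr 1
  · rw [← EReal.toReal_coe_ennreal]
    exact (EReal.coe_toReal (by simp [hA]) (by simp)).symm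
  · rw [← EReal.toReal_coe_ennreal]
    exact (EReal.coe_toReal (by simp [hB]) (by simp)).symm

/-- FOC closed form -/
lemma foc_closed (m lam : ℝ) (hm : 0 < m) (hm1 : m < 1) (hlam : 0 < lam) (hml : lam * m < 1)
    (hfoc : (∫ z in (0 : ℝ)..1, (z - m) / (1 + lam * (z - m))) = 0) :
    Real.log (1 - lam * m) = Real.log (1 + lam * (1 - m)) - lam := by
  have hpos : ∀ z ∈ Set.uIcc (0:ℝ) 1, 0 < 1 + lam * (z - m) := by
    intro z hz
    rw [Set.uIcc_of_le (by norm_num)] at hz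
    nlinarith [hz.1, hz.2]
  have hderiv : ∀ z ∈ Set.uIcc (0:ℝ) 1,
      HasDerivAt (fun z => z / lam - Real.log (1 + lam * (z - m)) / lam ^ 2)
        ((z - m) / (1 + lam * (z - m))) z := by
    intro z hz
    have h0 := hpos z hz
    have h1 : HasDerivAt (fun z : ℝ => 1 + lam * (z - m)) lam z := by
      simpa using (((hasDerivAt_id z).sub_const m).const_mul lam).const_add 1
    have h2 : HasDerivAt (fun z => Real.log (1 + lam * (z - m))) (lam / (1 + lam * (z - m))) z := by
      simpa using (h1.log h0.ne')
    have h3 : HasDerivAt (fun z : ℝ => z / lam) (1 / lam) z := by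
      simpa using (hasDerivAt_id z).div_const lam
    have := h3.sub (h2.div_const (lam ^ 2))
    refine this.congr_deriv ?_
    field_simp
    ring
  have hcont : IntervalIntegrable (fun z => (z - m) / (1 + lam * (z - m))) volume 0 1 := by
    apply ContinuousOn.intervalIntegrable
    exact (continuousOn_id.sub continuousOn_const).div
      (Continuous.continuousOn (by continuity)) (fun z hz => (hpos z hz).ne')
  have := intervalIntegral.integral_eq_sub_of_hasDerivAt hderiv hcont
  rw [hfoc] at this
  have h10 : (0:ℝ) = 1 / lam - Real.log (1 + lam * (1 - m)) / lam ^ 2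
      - (0 / lam - Real.log (1 + lam * (0 - m)) / lam ^ 2) := by
    simpa using this
  have hlog0 : Real.log (1 + lam * (0 - m)) = Real.log (1 - lam * m) := by ring_nf
  rw [hlog0] at h10
  set A := Real.log (1 + lam * (1 - m)) with hA
  set B := Real.log (1 - lam * m) with hB
  have e1 : (A - B) / lam ^ 2 = 1 / lam := by
    rw [zero_div] at h10
    rw [sub_div]; linarith
  have e2 : (A - B) * lam = lam * lam := by
    have := congrArg (fun x => x * lam ^ 2) e1
    rw [div_mul_cancel₀ _ (pow_ne_zero 2 hlam.ne')] at this
    rw [this]; field_simp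
  have := mul_right_cancel₀ hlam.ne' e2
  linarith

/-- Closed form for the clipped log-integral -/
lemma clipped_closed (m c lam : ℝ) (hm : 0 < m) (hm1 : m < 1) (hc : 1 < c)
    (hlam : 0 < lam) (hml : lam * m < 1) (hzc : m + (c - 1) / lam < 1) :
    (∫ z in (0:ℝ)..1, Real.log (min c (1 + lam * (z - m))))
      = (1 - m) * Real.log c
        + (Real.log c + 1 - c - lam * m - (1 - lam * m) * Real.log (1 - lam * m)) / lam := by
  set zc := m + (c - 1) / lam with hzcdef
  have hc1 : 0 < c - 1 := by linarith
  have hzc0 : 0 < zc := by positivity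
  have hzc1 : zc < 1 := hzc
  have hposIcc : ∀ z ∈ Set.Icc (0:ℝ) 1, 0 < 1 + lam * (z - m) := by
    intro z hz; nlinarith [hz.1, hz.2]
  have hminpos : ∀ z ∈ Set.Icc (0:ℝ) 1, 0 < min c (1 + lam * (z - m)) := by
    intro z hz; exact lt_min (by linarith) (hposIcc z hz)
  have hcontmin : Continuous (fun z => min c (1 + lam * (z - m))) :=
    continuous_const.min (by continuity)
  have hInt : ∀ a b : ℝ, Set.uIcc a b ⊆ Set.Icc (0:ℝ) 1 →
      IntervalIntegrable (fun z => Real.log (min c (1 + lam * (z - m)))) volume a b := by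
    intro a b hab
    apply ContinuousOn.intervalIntegrable
    exact ContinuousOn.log (hcontmin.continuousOn) (fun z hz => (hminpos z (hab hz)).ne')
  have hsub1 : Set.uIcc (0:ℝ) zc ⊆ Set.Icc 0 1 := by
    rw [Set.uIcc_of_le hzc0.le]; exact Set.Icc_subset_Icc le_rfl hzc1.le
  have hsub2 : Set.uIcc zc (1:ℝ) ⊆ Set.Icc 0 1 := by
    rw [Set.uIcc_of_le hzc1.le]; exact Set.Icc_subset_Icc hzc0.le le_rfl
  have hsplit := intervalIntegral.integral_add_adjacent_intervals
    (hInt 0 zc hsub1) (hInt zc 1 hsub2)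
  rw [← hsplit]
  -- first piece: min = 1 + lam*(z-m)
  have hpiece1 : (∫ z in (0:ℝ)..zc, Real.log (min c (1 + lam * (z - m))))
      = ∫ z in (0:ℝ)..zc, Real.log (1 + lam * (z - m)) := by
    apply intervalIntegral.integral_congr
    intro z hz
    have hz' : z ≤ zc := by
      rw [Set.uIcc_of_le hzc0.le] at hz; exact hz.2
    have : 1 + lam * (z - m) ≤ c := by
      have : lam * (z - m) ≤ lam * (zc - m) := by
        apply mul_le_mul_of_nonneg_left (by linarith) hlam.le
      have h2 : lam * (zc - m) = c - 1 := by
        rw [hzcdef]; field_simp; ring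
      linarith
    simp [min_eq_right this]
  -- second piece: min = c
  have hpiece2 : (∫ z in zc..(1:ℝ), Real.log (min c (1 + lam * (z - m))))
      = (1 - zc) * Real.log c := by
    rw [show (∫ z in zc..(1:ℝ), Real.log (min c (1 + lam * (z - m))))
        = ∫ z in zc..(1:ℝ), Real.log c from ?_]
    · simp
    apply intervalIntegral.integral_congr
    intro z hz
    rw [Set.uIcc_of_le hzc1.le] at hz
    have : c ≤ 1 + lam * (z - m) := by
      have : lam * (zc - m) ≤ lam * (z - m) :=
        mul_le_mul_of_nonneg_left (by linarith [hz.1]) hlam.le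
      have h2 : lam * (zc - m) = c - 1 := by rw [hzcdef]; field_simp; ring
      linarith
    simp [min_eq_left this]
  -- FTC for first piece
  have hftc : (∫ z in (0:ℝ)..zc, Real.log (1 + lam * (z - m)))
      = (1 + lam * (zc - m)) * (Real.log (1 + lam * (zc - m)) - 1) / lam
        - (1 + lam * (0 - m)) * (Real.log (1 + lam * (0 - m)) - 1) / lam := by
    apply intervalIntegral.integral_eq_sub_of_hasDerivAt
      (f := fun z => (1 + lam * (z - m)) * (Real.log (1 + lam * (z - m)) - 1) / lam)
    · intro z hz
      have h0 : 0 < 1 + lam * (z - m) := hposIcc z (hsub1 hz)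
      have h1 : HasDerivAt (fun z : ℝ => 1 + lam * (z - m)) lam z := by
        simpa using (((hasDerivAt_id z).sub_const m).const_mul lam).const_add 1
      have h2 : HasDerivAt (fun z => Real.log (1 + lam * (z - m)))
          (lam / (1 + lam * (z - m))) z := by simpa using (h1.log h0.ne')
      have h3 := (h1.mul (h2.sub_const 1)).div_const lam
      refine h3.congr_deriv ?_
      field_simp
      ring
    · apply ContinuousOn.intervalIntegrable
      exact ContinuousOn.log (Continuous.continuousOn (by continuity))
        (fun z hz => (hposIcc z (hsub1 hz)).ne')
  have hwzc : 1 + lam * (zc - m) = c := by rw [hzcdef]; field_simp; ring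
  rw [hpiece1, hpiece2, hftc, hwzc]
  have hw0 : 1 + lam * (0 - m) = 1 - lam * m := by ring
  rw [hw0]
  have hzz : (1 - zc) * Real.log c
      = (1 - m) * Real.log c - (c - 1) / lam * Real.log c := by
    rw [hzcdef]; ring
  rw [hzz]
  field_simp
  ring

lemma G_hasDeriv (m c lam : ℝ) (hlam : 0 < lam) (hml : lam * m < 1) :
    HasDerivAt (fun l => (1 - m) * Real.log c
        + (Real.log c + 1 - c - l * m - (1 - l * m) * Real.log (1 - l * m)) / l)
      ((m * Real.log (1 - lam * m) * lam
        - (Real.log c + 1 - c - lam * m - (1 - lam * m) * Real.log (1 - lam * m))) / lam ^ 2)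
      lam := by
  have hpos : 0 < 1 - lam * m := by linarith
  have h1 : HasDerivAt (fun l : ℝ => 1 - l * m) (-m) lam := by
    simpa using ((hasDerivAt_id lam).mul_const m).const_sub 1
  have h2 : HasDerivAt (fun l => Real.log (1 - l * m)) (-m / (1 - lam * m)) lam :=
    h1.log hpos.ne'
  have h3 := h1.mul h2
  have hN : HasDerivAt
      (fun l => Real.log c + 1 - c - l * m - (1 - l * m) * Real.log (1 - l * m))
      (m * Real.log (1 - lam * m)) lam := by
    have h4 : HasDerivAt (fun l : ℝ => Real.log c + 1 - c - l * m)
        (-m) lam := by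
      simpa using ((hasDerivAt_id lam).mul_const m).const_sub (Real.log c + 1 - c)
    have := h4.sub h3
    refine this.congr_deriv ?_
    have hne : 1 - lam * m ≠ 0 := hpos.ne'
    rw [mul_div_cancel₀ _ hne]
    ring
  have hdiv := hN.div (hasDerivAt_id lam) hlam.ne'
  have := hdiv.const_add ((1 - m) * Real.log c)
  refine this.congr_deriv ?_
  simp only [id]
  ring

lemma numer_neg (m c lam : ℝ) (hm : 0 < m) (hm1 : m < 1) (hc : 1 < c) (hlam : 0 < lam)
    (hml : lam * m < 1) (hb : c - 1 < lam * (1 - m))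
    (hfoc : Real.log (1 - lam * m) = Real.log (1 + lam * (1 - m)) - lam) :
    (m * Real.log (1 - lam * m) * lam
        - (Real.log c + 1 - c - lam * m - (1 - lam * m) * Real.log (1 - lam * m))) / lam ^ 2
      < 0 := by
  set b := lam * (1 - m) with hbdef
  have hb0 : 0 < b := by rw [hbdef]; nlinarith
  have hb1 : c < 1 + b := by linarith
  have hx : (0:ℝ) < (1 + b) / c := by positivity
  have hx1 : (1 + b) / c ≠ 1 := by
    have : (1:ℝ) < (1 + b) / c := (one_lt_div (by linarith)).mpr hb1
    exact this.ne'
  have hlog := Real.log_lt_sub_one_of_pos hx hx1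
  rw [Real.log_div (by linarith) (by linarith)] at hlog
  have hdivle : (1 + b) / c - 1 ≤ 1 + b - c := by
    rw [div_sub_one (by linarith : c ≠ 0)]
    exact div_le_self (by linarith) hc.le
  -- log(1+b) - log c < 1 + b - c
  have key : Real.log (1 + b) - Real.log c < 1 + b - c := by linarith
  -- numerator = log(1+b) - b + c - 1 + ... compute
  have hnum : m * Real.log (1 - lam * m) * lam
      - (Real.log c + 1 - c - lam * m - (1 - lam * m) * Real.log (1 - lam * m))
      = Real.log (1 - lam * m) + c - 1 + lam * m - Real.log c := by ring
  rw [hnum, hfoc]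
  apply div_neg_of_neg_of_pos _ (by positivity)
  have : lam - lam * m = b := by rw [hbdef]; ring
  nlinarith [key]

lemma exists_better (G : ℝ → ℝ) (x d a : ℝ) (hG : HasDerivAt G d x) (hd : d < 0)
    (ha : a < x) : ∃ y, y ∈ Set.Ioo a x ∧ G x < G y := by
  have h := hasDerivAt_iff_tendsto_slope.mp hG
  have h2 : Filter.Tendsto (slope G x) (nhdsWithin x (Set.Iio x)) (nhds d) :=
    h.mono_left (nhdsWithin_mono _ (fun y hy => ne_of_lt hy))
  have h3 : ∀ᶠ y in nhdsWithin x (Set.Iio x), slope G x y < 0 :=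
    h2.eventually_lt_const hd
  have h4 : Set.Ioo a x ∈ nhdsWithin x (Set.Iio x) :=
    Ioo_mem_nhdsLT_of_mem ⟨ha, le_rfl⟩
  obtain ⟨y, hy1, hy2⟩ := (h3.and (Filter.eventually_of_mem h4 (fun y hy => hy))).exists
  refine ⟨y, hy2, ?_⟩
  have hslope : slope G x y = (G y - G x) / (y - x) := slope_def_field G x y
  rw [hslope] at hy1
  have hyx : y - x < 0 := by linarith [hy2.2]
  rcases div_neg_iff.mp hy1 with ⟨h5, h6⟩ | ⟨h5, h6⟩
  · linarith
  · linarith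

lemma Jcon_eq (m c lam : ℝ) (hm : 0 < m) (hc : 1 < c) (hlam : 0 ≤ lam) (hml : lam * m < 1) :
    eintE (volume.restrict (Set.Icc (0:ℝ) 1)) (fun z => elog (min c (1 + lam * (z - m))))
      = ((∫ z in (0:ℝ)..1, Real.log (min c (1 + lam * (z - m))) : ℝ) : EReal) := by
  have hminpos : ∀ z ∈ Set.Icc (0:ℝ) 1, 0 < min c (1 + lam * (z - m)) := by
    intro z hz
    refine lt_min (by linarith) ?_
    nlinarith [hz.1, hz.2]
  have hae : (fun z => elog (min c (1 + lam * (z - m))))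
      =ᵐ[volume.restrict (Set.Icc (0:ℝ) 1)]
      (fun z => ((Real.log (min c (1 + lam * (z - m))) : ℝ) : EReal)) := by
    filter_upwards [ae_restrict_mem measurableSet_Icc] with z hz
    simp [elog, not_le.mpr (hminpos z hz)]
  rw [eintE_congr_ae hae]
  have hcontOn : ContinuousOn (fun z => Real.log (min c (1 + lam * (z - m))))
      (Set.Icc (0:ℝ) 1) :=
    ContinuousOn.log ((continuous_const.min (by continuity)).continuousOn)
      (fun z hz => (hminpos z hz).ne')
  have hInt : Integrable (fun z => Real.log (min c (1 + lam * (z - m))))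
      (volume.restrict (Set.Icc (0:ℝ) 1)) := hcontOn.integrableOn_Icc
  rw [eintE_coe_eq_integral _ _ hInt]
  norm_cast
  rw [show (∫ z in Set.Icc (0:ℝ) 1, Real.log (min c (1 + lam * (z - m))))
      = ∫ z in Set.Ioc (0:ℝ) 1, Real.log (min c (1 + lam * (z - m))) from
      integral_Icc_eq_integral_Ioc,
    intervalIntegral.integral_of_le (by norm_num : (0:ℝ) ≤ 1)]

end Aux

/-- **counterexample without an LFD.** Against the uniform alternative on
`[0,1]`, truncating the unconstrained optimal bet `1 + λ*(z − μ)` at level `c` is strictly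
suboptimal compared with re-optimizing the betting coefficient after clipping. -/
theorem optimize_then_constrain_fails_without_lfd
    (m : ℝ) (hm : m ∈ Set.Ioo (0 : ℝ) (1 / 2))
    (lamStar : ℝ) (hlamStar : lamStar ∈ Set.Ioo (0 : ℝ) (1 / m))
    (hfoc : (∫ z in (0 : ℝ)..1, (z - m) / (1 + lamStar * (z - m))) = 0)
    (c : ℝ) (hc : 1 < c) (hcm : m + (c - 1) / lamStar < 1)
    (Jcon : ℝ → EReal)
    (hJcon : Jcon = fun lam =>
      eintE (volume.restrict (Set.Icc (0 : ℝ) 1))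
        (fun z => elog (min c (1 + lam * (z - m)))))
    (lamNew : ℝ) (hlamNew : 0 ≤ lamNew)
    (hmax : ∀ lam : ℝ, 0 ≤ lam → Jcon lam ≤ Jcon lamNew) :
    Jcon lamStar < Jcon lamNew := by
  obtain ⟨hm0, hm2⟩ := hm
  have hm1 : m < 1 := by linarith
  obtain ⟨hls0, hls1⟩ := hlamStar
  have hml : lamStar * m < 1 := (lt_div_iff₀ hm0).mp hls1
  have hcm' : c - 1 < lamStar * (1 - m) := by
    have h1 : (c - 1) / lamStar < 1 - m := by linarith
    have := (div_lt_iff₀ hls0).mp h1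
    nlinarith
  have ha0 : 0 < (c - 1) / (1 - m) := div_pos (by linarith) (by linarith)
  have haS : (c - 1) / (1 - m) < lamStar := by
    rw [div_lt_iff₀ (by linarith : (0:ℝ) < 1 - m)]
    nlinarith
  have hfocI := foc_closed m lamStar hm0 hm1 hls0 hml hfoc
  have hder := G_hasDeriv m c lamStar hls0 hml
  have hneg := numer_neg m c lamStar hm0 hm1 hc hls0 hml hcm' hfocI
  obtain ⟨y, ⟨hya, hyS⟩, hGy⟩ := exists_better _ lamStar _ ((c - 1) / (1 - m)) hder hneg haS
  have hy0 : 0 < y := ha0.trans hya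
  have hyml : y * m < 1 := by nlinarith
  have hyb : c - 1 < y * (1 - m) := by
    have := (div_lt_iff₀ (by linarith : (0:ℝ) < 1 - m)).mp hya
    nlinarith
  have hyzc : m + (c - 1) / y < 1 := by
    have : (c - 1) / y < 1 - m := (div_lt_iff₀ hy0).mpr (by nlinarith)
    linarith
  have hzcS : m + (c - 1) / lamStar < 1 := hcm
  have hclosedS := clipped_closed m c lamStar hm0 hm1 hc hls0 hml hzcS
  have hclosedY := clipped_closed m c y hm0 hm1 hc hy0 hyml hyzc
  have eS : Jcon lamStar = (((1 - m) * Real.log c + (Real.log c + 1 - c - lamStar * m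
      - (1 - lamStar * m) * Real.log (1 - lamStar * m)) / lamStar : ℝ) : EReal) := by
    simp only [hJcon]
    rw [Jcon_eq m c lamStar hm0 hc hls0.le hml, hclosedS]
  have eY : Jcon y = (((1 - m) * Real.log c + (Real.log c + 1 - c - y * m
      - (1 - y * m) * Real.log (1 - y * m)) / y : ℝ) : EReal) := by
    simp only [hJcon]
    rw [Jcon_eq m c y hm0 hc hy0.le hyml, hclosedY]
  have hlt : Jcon lamStar < Jcon y := by
    rw [eS, eY]
    exact_mod_cast hGy
  exact lt_of_lt_of_le hlt (hmax y hy0.le)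
end
end
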